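/- arXiv:0804.2543 — 3 statements merged into one kernel-verified Lean document; each statement's English description precedes it below -/
import Mathlib

section
/- For every integer n ≥ 1, √(e/π) ≤ n^{n/2} / (Γ((n+1)/2) · (√(2e))^{n-1}) ≤ 1, with the upper bound attained at n = 1. -/
/-!
Let `g n = n^{n/2} / (Γ((n+1)/2) (2e)^{(n-1)/2})`. The functional equation of `Γ` gives
`g (n + 2) / g n = (n+2)^{(n+2)/2} / (e (n+1) n^{n/2})`. For real `x > 0` the logarithm of
`(x+2)^{(x+2)/2} / ((x+1) x^{x/2})` has derivative `log (1 + 2/x) / 2 - 1/(x+1) ≥ 0` and tends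
to `1` at infinity, so the ratio is at most `1`: `g` decreases along each parity class, whence
`g n ≤ max (g 1) (g 2) = 1`. Written in terms of the Stirling sequence
`m! / (√(2m) (m/e)^m) → √π`, both `g (2m)` and `g (2m+1)` tend to `√(e/π)`, which is
therefore a lower bound.
-/

open Real Filter Topology Set Stirling
open scoped Nat

lemma two_div_add_one_le_log_one_add_two_div {x : ℝ} (hx : 0 < x) :
    2 / (x + 1) ≤ log (1 + 2 / x) := by
  have h := le_hasSum (hasSum_log_one_add_inv (half_pos hx)) 0 fun k _ => by positivity
  rw [inv_div] at h
  refine le_trans (le_of_eq ?_) h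
  norm_num
  field_simp

noncomputable def logStepRatio (x : ℝ) : ℝ :=
  (x + 2) / 2 * log (x + 2) - x / 2 * log x - log (x + 1)

lemma hasDerivAt_logStepRatio {x : ℝ} (hx : 0 < x) :
    HasDerivAt logStepRatio (log (1 + 2 / x) / 2 - 1 / (x + 1)) x := by
  have h2 := ((hasDerivAt_mul_log (x := x + 2) (by positivity)).comp_add_const x 2).div_const 2
  have h0 := (hasDerivAt_mul_log hx.ne').div_const 2
  have h1 := ((hasDerivAt_id' x).add_const 1).log (by positivity)
  have hf : logStepRatio = fun y => (y + 2) * log (y + 2) / 2 - y * log y / 2 - log (y + 1) := by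
    funext y; rw [logStepRatio]; ring
  rw [hf, show 1 + 2 / x = (x + 2) / x by field_simp, log_div (by positivity) hx.ne']
  exact ((h2.sub h0).sub h1).congr_deriv (by ring)

lemma monotoneOn_logStepRatio : MonotoneOn logStepRatio (Ioi 0) := by
  refine monotoneOn_of_hasDerivWithinAt_nonneg (f' := fun x => log (1 + 2 / x) / 2 - 1 / (x + 1))
    (convex_Ioi 0) (fun x hx => (hasDerivAt_logStepRatio hx).continuousAt.continuousWithinAt)
    (fun x hx => ?_) (fun x hx => ?_) <;> rw [interior_Ioi] at hx
  · exact (hasDerivAt_logStepRatio hx).hasDerivWithinAt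
  · linarith [two_div_add_one_le_log_one_add_two_div hx,
      show 2 / (x + 1) = 2 * (1 / (x + 1)) by ring]

lemma tendsto_logStepRatio : Tendsto logStepRatio atTop (𝓝 1) := by
  have h1 := (tendsto_mul_log_one_add_div_atTop 2).div_const 2
  have h2 : Tendsto (fun x : ℝ => log (1 + (x + 1)⁻¹)) atTop (𝓝 0) := by
    have : Tendsto (fun x : ℝ => 1 + (x + 1)⁻¹) atTop (𝓝 (1 + 0)) :=
      (tendsto_inv_atTop_zero.comp (tendsto_atTop_add_const_right atTop 1 tendsto_id)).const_add 1
    rw [add_zero] at this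
    have h := (continuousAt_log one_ne_zero).tendsto.comp this
    rwa [log_one] at h
  have := h1.add h2
  rw [show (2 : ℝ) / 2 + 0 = 1 by norm_num] at this
  refine this.congr' ?_
  filter_upwards [eventually_gt_atTop 0] with x hx
  rw [logStepRatio, show 1 + 2 / x = (x + 2) / x by field_simp,
    show 1 + (x + 1)⁻¹ = (x + 2) / (x + 1) by field_simp; ring,
    log_div (by positivity) hx.ne', log_div (by positivity) (by positivity)]
  ring

lemma logStepRatio_le_one {x : ℝ} (hx : 0 < x) : logStepRatio x ≤ 1 :=
  ge_of_tendsto tendsto_logStepRatio <| by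
    filter_upwards [eventually_ge_atTop x] with y hy
    exact monotoneOn_logStepRatio hx (hx.trans_le hy) hy

lemma rpow_add_two_div_two_le {x : ℝ} (hx : 0 < x) :
    (x + 2) ^ ((x + 2) / 2) ≤ exp 1 * (x + 1) * x ^ (x / 2) := by
  rw [← log_le_log_iff (by positivity) (by positivity), log_mul (by positivity) (by positivity),
    log_mul (by positivity) (by positivity), log_exp, log_rpow (by positivity), log_rpow hx]
  have := logStepRatio_le_one hx
  rw [logStepRatio] at this
  linarith

lemma rpow_two_mul_add_one_div_two {x : ℝ} (hx : 0 ≤ x) (m : ℕ) :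
    x ^ ((2 * m + 1 : ℝ) / 2) = x ^ m * √x := by
  rw [add_div, mul_div_cancel_left₀ _ two_ne_zero, rpow_add' hx (by positivity), rpow_natCast,
    sqrt_eq_rpow, one_div]

lemma Gamma_nat_add_half_mul_factorial (m : ℕ) :
    Gamma (m + 1 / 2) * m ! = (2 * m) ! * √π / 2 ^ (2 * m) := by
  have h := Gamma_mul_Gamma_add_half ((m : ℝ) + 1 / 2)
  rw [add_assoc, add_halves, Gamma_nat_eq_factorial, mul_add, mul_one_div_cancel two_ne_zero,
    show (2 : ℝ) * m + 1 = ((2 * m : ℕ) : ℝ) + 1 by push_cast; ring, Gamma_nat_eq_factorial,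
    show (1 : ℝ) - (((2 * m : ℕ) : ℝ) + 1) = -((2 * m : ℕ) : ℝ) by ring,
    rpow_neg zero_le_two, rpow_natCast] at h
  rw [h, div_eq_mul_inv]
  ring

noncomputable def stirlingRatio (n : ℕ) : ℝ :=
  (n : ℝ) ^ ((n : ℝ) / 2) / (Gamma (((n : ℝ) + 1) / 2) * √(2 * exp 1) ^ (n - 1))

lemma stirlingRatio_nonneg (n : ℕ) : 0 ≤ stirlingRatio n := by
  have := Gamma_pos_of_pos (by positivity : (0 : ℝ) < ((n : ℝ) + 1) / 2)
  unfold stirlingRatio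
  positivity

lemma stirlingRatio_one : stirlingRatio 1 = 1 := by
  simp [stirlingRatio]

lemma stirlingRatio_two_le_one : stirlingRatio 2 ≤ 1 := by
  have hΓ : Gamma (((2 : ℕ) + 1) / 2 : ℝ) = √π / 2 := by
    rw [show ((2 : ℕ) + 1) / 2 = (1 / 2 : ℝ) + 1 by norm_num, Gamma_add_one (by norm_num),
      Gamma_one_half_eq]
    ring
  have h : 4 ≤ √(π * (2 * exp 1)) := le_sqrt_of_sq_le (by nlinarith [pi_gt_d2, exp_one_gt_d9])
  rw [sqrt_mul pi_pos.le] at h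
  rw [stirlingRatio, hΓ, div_le_one (by positivity)]
  simp only [Nat.cast_ofNat, div_self (two_ne_zero (α := ℝ)), rpow_one, Nat.add_one_sub_one,
    pow_one]
  linarith

lemma stirlingRatio_add_two {n : ℕ} (hn : 0 < n) :
    stirlingRatio (n + 2) =
      ((n : ℝ) + 2) ^ (((n : ℝ) + 2) / 2) / (exp 1 * (n + 1) * (n : ℝ) ^ ((n : ℝ) / 2)) *
        stirlingRatio n := by
  have hΓ :
      Gamma (((n : ℝ) + 2 + 1) / 2) = ((n : ℝ) + 1) / 2 * Gamma (((n : ℝ) + 1) / 2) := by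
    rw [show ((n : ℝ) + 2 + 1) / 2 = ((n : ℝ) + 1) / 2 + 1 by ring,
      Gamma_add_one (by positivity)]
  have hpow : √(2 * exp 1) ^ (n + 2 - 1) = 2 * exp 1 * √(2 * exp 1) ^ (n - 1) := by
    rw [show n + 2 - 1 = 2 + (n - 1) by omega, pow_add, sq_sqrt (by positivity)]
  have := Gamma_pos_of_pos (by positivity : (0 : ℝ) < ((n : ℝ) + 1) / 2)
  simp only [stirlingRatio, Nat.cast_add, Nat.cast_ofNat, hΓ, hpow]
  field_simp

lemma stirlingRatio_add_two_le {n : ℕ} (hn : 0 < n) :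
    stirlingRatio (n + 2) ≤ stirlingRatio n := by
  rw [stirlingRatio_add_two hn]
  refine mul_le_of_le_one_left (stirlingRatio_nonneg n) ((div_le_one (by positivity)).2 ?_)
  exact rpow_add_two_div_two_le (by positivity)

lemma antitone_stirlingRatio_add_two_mul {n : ℕ} (hn : 0 < n) :
    Antitone fun k => stirlingRatio (n + 2 * k) :=
  antitone_nat_of_succ_le fun k => by
    simpa only [mul_add, mul_one, ← add_assoc] using
      stirlingRatio_add_two_le (n := n + 2 * k) (by omega)

lemma stirlingRatio_le_one {n : ℕ} (hn : 0 < n) : stirlingRatio n ≤ 1 := by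
  obtain ⟨k, rfl | rfl⟩ := Nat.even_or_odd' n
  · obtain ⟨k, rfl⟩ := Nat.exists_eq_succ_of_ne_zero (by omega : k ≠ 0)
    calc stirlingRatio (2 * (k + 1)) = stirlingRatio (2 + 2 * k) := by ring_nf
      _ ≤ stirlingRatio 2 := antitone_stirlingRatio_add_two_mul two_pos (Nat.zero_le k)
      _ ≤ 1 := stirlingRatio_two_le_one
  · calc stirlingRatio (2 * k + 1) = stirlingRatio (1 + 2 * k) := by ring_nf
      _ ≤ stirlingRatio 1 := antitone_stirlingRatio_add_two_mul one_pos (Nat.zero_le k)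
      _ = 1 := stirlingRatio_one

lemma stirlingRatio_two_mul {m : ℕ} (hm : m ≠ 0) :
    stirlingRatio (2 * m) = stirlingSeq m / stirlingSeq (2 * m) * √(exp 1 / π) := by
  have hm : (0 : ℝ) < m := by positivity
  have hΓ : Gamma ((((2 * m : ℕ) : ℝ) + 1) / 2) = (2 * m) ! * √π / 2 ^ (2 * m) / m ! := by
    rw [eq_div_iff (by positivity), ← Gamma_nat_add_half_mul_factorial]; push_cast; ring_nf
  have hpow : √(2 * exp 1) ^ (2 * m - 1) = (2 * exp 1) ^ m / √(2 * exp 1) := by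
    rw [eq_div_iff (by positivity), ← pow_succ, Nat.sub_add_cancel (by omega), pow_mul,
      sq_sqrt (by positivity)]
  have hrpow : ((2 * m : ℕ) : ℝ) ^ (((2 * m : ℕ) : ℝ) / 2) = (2 * m) ^ m := by
    push_cast; rw [mul_div_cancel_left₀ _ two_ne_zero, rpow_natCast]
  rw [stirlingRatio, hΓ, hpow, hrpow, stirlingSeq, stirlingSeq, sqrt_div' _ pi_pos.le,
    sqrt_mul' _ (exp_pos 1).le]
  push_cast
  rw [show (2 : ℝ) * (2 * m) = 2 * 2 * m by ring, sqrt_mul' _ hm.le, sqrt_mul' _ hm.le,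
    sqrt_mul_self zero_le_two, div_pow, div_pow, mul_pow, mul_pow]
  field_simp
  rw [sq_sqrt zero_le_two]
  ring

lemma stirlingRatio_two_mul_add_one {m : ℕ} (hm : m ≠ 0) :
    stirlingRatio (2 * m + 1) = (1 + 2⁻¹ / m) ^ m * √(1 + 2⁻¹ / m) / stirlingSeq m := by
  have hm : (0 : ℝ) < m := by positivity
  have h1 : (1 : ℝ) + 2⁻¹ / m = (2 * m + 1) / (2 * m) := by field_simp
  have hΓ : Gamma ((((2 * m + 1 : ℕ) : ℝ) + 1) / 2) = m ! := by
    rw [← Gamma_nat_eq_factorial]; push_cast; ring_nf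
  rw [stirlingRatio, hΓ, Nat.add_sub_cancel, pow_mul, sq_sqrt (by positivity), stirlingSeq,
    h1, sqrt_div' _ (by positivity)]
  push_cast
  rw [rpow_two_mul_add_one_div_two (by positivity), div_pow, div_pow]
  field_simp
  ring

lemma tendsto_stirlingRatio_two_mul :
    Tendsto (fun m => stirlingRatio (2 * m)) atTop (𝓝 √(exp 1 / π)) := by
  have hπ : √π ≠ 0 := (sqrt_pos.2 pi_pos).ne'
  have h := (tendsto_stirlingSeq_sqrt_pi.div (tendsto_stirlingSeq_sqrt_pi.comp
    (tendsto_id.const_mul_atTop' two_pos)) hπ).mul_const √(exp 1 / π)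
  rw [div_self hπ, one_mul] at h
  refine h.congr' ?_
  filter_upwards [eventually_ne_atTop 0] with m hm
  exact (stirlingRatio_two_mul hm).symm

lemma tendsto_stirlingRatio_two_mul_add_one :
    Tendsto (fun m => stirlingRatio (2 * m + 1)) atTop (𝓝 √(exp 1 / π)) := by
  have hsqrt : Tendsto (fun m : ℕ => √(1 + 2⁻¹ / m)) atTop (𝓝 1) := by
    simpa using ((tendsto_const_div_atTop_nhds_zero_nat (2⁻¹ : ℝ)).const_add 1).sqrt
  have h := ((tendsto_one_add_div_pow_exp 2⁻¹).mul hsqrt).div tendsto_stirlingSeq_sqrt_pi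
    (sqrt_pos.2 pi_pos).ne'
  have hlim : exp 2⁻¹ / √π = √(exp 1 / π) := by
    rw [← one_div, exp_half, sqrt_div' _ pi_pos.le]
  rw [mul_one, hlim] at h
  refine h.congr' ?_
  filter_upwards [eventually_ne_atTop 0] with m hm
  exact (stirlingRatio_two_mul_add_one hm).symm

lemma sqrt_exp_div_pi_le_stirlingRatio {n : ℕ} (hn : 0 < n) :
    √(exp 1 / π) ≤ stirlingRatio n := by
  have hlim : Tendsto (fun k => stirlingRatio (n + 2 * k)) atTop (𝓝 √(exp 1 / π)) := by
    obtain ⟨r, rfl | rfl⟩ := Nat.even_or_odd' n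
    · refine (tendsto_stirlingRatio_two_mul.comp (tendsto_add_atTop_nat r)).congr fun k => ?_
      simp only [Function.comp, mul_add, add_comm]
    · refine (tendsto_stirlingRatio_two_mul_add_one.comp (tendsto_add_atTop_nat r)).congr
        fun k => ?_
      simp only [Function.comp]
      ring_nf
  exact le_of_tendsto' hlim fun k => antitone_stirlingRatio_add_two_mul hn (Nat.zero_le k)

/-- For every n ≥ 1, √(e/π) ≤ n^{n/2}/(Γ((n+1)/2)·(√(2e))^{n-1}) ≤ 1,
with the upper bound attained at n = 1. -/
theorem stmt1 (n : ℕ) (hn : 1 ≤ n) :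
    Real.sqrt (Real.exp 1 / Real.pi) ≤
        (n : ℝ) ^ ((n : ℝ) / 2) /
          (Real.Gamma (((n : ℝ) + 1) / 2) * Real.sqrt (2 * Real.exp 1) ^ (n - 1)) ∧
      (n : ℝ) ^ ((n : ℝ) / 2) /
          (Real.Gamma (((n : ℝ) + 1) / 2) * Real.sqrt (2 * Real.exp 1) ^ (n - 1)) ≤ 1 ∧
      (n = 1 →
        (n : ℝ) ^ ((n : ℝ) / 2) /
          (Real.Gamma (((n : ℝ) + 1) / 2) * Real.sqrt (2 * Real.exp 1) ^ (n - 1)) = 1) := by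
  refine ⟨sqrt_exp_div_pi_le_stirlingRatio hn, stirlingRatio_le_one hn, ?_⟩
  rintro rfl
  exact stirlingRatio_one
end

section
/- The infinite product ∏_{n=1}^∞ (1 − z/(π² n²)) converges for every complex z and equals sin(√z)/√z (interpreted as the entire function ∑_{k=0}^∞ (−1)^k z^k/(2k+1)!). -/
/-!
Writing `z = u²`, the product is Euler's sine product `∏ (1 - (u/π)²/n²) = sin u / u`, and the
series is the Taylor series of `sin u` divided by `u`. The case `z = 0` is separate, since
`sin 0 / 0 = 0` in Lean.
-/

open Real

namespace Complex

theorem hasSum_sin_div {u : ℂ} (hu : u ≠ 0) :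
    HasSum (fun k : ℕ => (-1) ^ k * (u ^ 2) ^ k / (Nat.factorial (2 * k + 1) : ℂ)) (sin u / u) := by
  refine ((hasSum_sin u).div_const u).congr_fun fun k => ?_
  rw [← pow_mul, pow_succ]
  field_simp

theorem hasProd_one_add_sineTerm {x : ℂ} (hx : x ≠ 0) :
    HasProd (fun n : ℕ => 1 + sineTerm x n) (sin (π * x) / (π * x)) :=
  ((multipliable_sineTerm x).hasProd_iff_tendsto_nat).mpr (tendsto_euler_sin_prod' hx)

theorem hasProd_one_sub_sq_div_pi_sq {u : ℂ} (hu : u ≠ 0) :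
    HasProd (fun n : ℕ => 1 - u ^ 2 / ((π : ℂ) ^ 2 * ((n : ℂ) + 1) ^ 2)) (sin u / u) := by
  have hπ : (π : ℂ) ≠ 0 := ofReal_ne_zero.mpr pi_ne_zero
  have h := hasProd_one_add_sineTerm (div_ne_zero hu hπ)
  rw [mul_div_cancel₀ u hπ] at h
  refine h.congr_fun fun n => ?_
  field_simp
  ring

end Complex

/-- The infinite product ∏_{n≥1} (1 - z/(π²n²)) converges for every complex z and equals
the entire function sin(√z)/√z = ∑_{k≥0} (-1)^k z^k/(2k+1)!. -/
theorem stmt9 (z : ℂ) :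
    HasProd (fun n : ℕ => 1 - z / ((Real.pi : ℂ) ^ 2 * ((n : ℂ) + 1) ^ 2))
      (∑' k : ℕ, (-1) ^ k * z ^ k / (Nat.factorial (2 * k + 1) : ℂ)) := by
  rcases eq_or_ne z 0 with rfl | hz
  · have hsum : ∑' k : ℕ, (-1) ^ k * (0 : ℂ) ^ k / (Nat.factorial (2 * k + 1) : ℂ) = 1 := by
      rw [tsum_eq_single 0 fun k hk => by simp [zero_pow hk]]
      simp
    simp [hsum, hasProd_one]
  obtain ⟨u, rfl⟩ := IsAlgClosed.exists_pow_nat_eq z two_pos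
  have hu : u ≠ 0 := by rintro rfl; simp at hz
  rw [(Complex.hasSum_sin_div hu).tsum_eq]
  exact Complex.hasProd_one_sub_sq_div_pi_sq hu
end

section
/- The Airy kernel factorization: for all real x, y, (Ai(x)Ai'(y) − Ai(y)Ai'(x))/(x−y) = ∫₀^∞ Ai(x+ξ) Ai(y+ξ) dξ, where Ai is the Airy function (and the left-hand side is interpreted as Ai'(x)Ai'(x) − x·Ai(x)² ... i.e. its continuous extension when x = y). -/
/-!
Along any solution of `u'' = x u`, the shifted Wronskian
`ξ ↦ u(y+ξ) u'(x+ξ) - u(x+ξ) u'(y+ξ)` has derivative `(x - y) u(x+ξ) u(y+ξ)`, and on the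
diagonal `ξ ↦ (x+ξ) u(x+ξ)² - u'(x+ξ)²` has derivative `u(x+ξ)²`. Both identities follow
by integrating over `(0, ∞)`. The first primitive vanishes at `+∞` because `u` and `u'` do.
The second has a limit `L` because its derivative is integrable, and `ξ u(x+ξ)² → L` forces
`L = 0`: otherwise `u(x+ξ)²` would be comparable to `1/ξ`, which is not integrable at `+∞`.
-/

open MeasureTheory Filter Set Topology Asymptotics

theorem eq_zero_of_tendsto_smul_of_integrableOn_Ioi {E : Type*} [NormedAddCommGroup E]
    [NormedSpace ℝ E] {g : ℝ → E} {a : ℝ} {L : E}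
    (hg : IntegrableOn g (Ioi a)) (hL : Tendsto (fun t => t • g t) atTop (𝓝 L)) : L = 0 := by
  by_contra hL0
  have hpos : 0 < ‖L‖ := norm_pos_iff.mpr hL0
  have hinv : (fun t : ℝ => t⁻¹) =O[atTop] g := by
    refine IsBigO.of_bound (2 / ‖L‖) ?_
    filter_upwards [hL.norm.eventually (eventually_gt_nhds (half_lt_self hpos)),
      eventually_gt_atTop 0] with t hgt ht
    rw [norm_smul, Real.norm_of_nonneg ht.le] at hgt
    rw [norm_inv, Real.norm_of_nonneg ht.le, div_mul_eq_mul_div, le_div_iff₀ hpos,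
      inv_mul_le_iff₀ ht]
    linarith
  obtain ⟨s, hs, hint⟩ := hinv.integrableAtFilter
    measurable_inv.aestronglyMeasurable.stronglyMeasurableAtFilter ⟨Ioi a, Ioi_mem_atTop a, hg⟩
  obtain ⟨T, hT⟩ := mem_atTop_sets.mp hs
  exact not_integrableOn_Ioi_inv (hint.mono_set fun t ht => hT t ht.le)

theorem Filter.Tendsto.comp_const_add {α : Type*} {f : ℝ → α} {l : Filter α}
    (hf : Tendsto f atTop l) (a : ℝ) : Tendsto (fun ξ => f (a + ξ)) atTop l :=
  hf.comp (tendsto_atTop_add_const_left _ a tendsto_id)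

section AiryEquation

variable {u u' : ℝ → ℝ} (hu : ∀ x, HasDerivAt u (u' x) x)
  (hu' : ∀ x, HasDerivAt u' (x * u x) x)
include hu hu'

theorem hasDerivAt_airy_shifted_wronskian (x y ξ : ℝ) :
    HasDerivAt (fun ξ => u (y + ξ) * u' (x + ξ) - u (x + ξ) * u' (y + ξ))
      ((x - y) * (u (x + ξ) * u (y + ξ))) ξ := by
  have hx := (hu (x + ξ)).comp_const_add x ξ
  have hy := (hu (y + ξ)).comp_const_add y ξ
  have hx' := (hu' (x + ξ)).comp_const_add x ξ
  have hy' := (hu' (y + ξ)).comp_const_add y ξ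
  exact ((hy.mul hx').sub (hx.mul hy')).congr_deriv (by ring)

theorem hasDerivAt_airy_mul_sq_sub_sq (t : ℝ) :
    HasDerivAt (fun t => t * u t ^ 2 - u' t ^ 2) (u t ^ 2) t :=
  (((hasDerivAt_id t).mul ((hu t).pow 2)).sub ((hu' t).pow 2)).congr_deriv
    (by simp only [id, Pi.pow_apply]; ring)

variable (hlim : Tendsto u atTop (𝓝 0)) (hlim' : Tendsto u' atTop (𝓝 0))
include hlim hlim'

theorem integral_Ioi_airy_mul_shift {x y : ℝ} (hxy : x ≠ y)
    (hint : IntegrableOn (fun ξ => u (x + ξ) * u (y + ξ)) (Ioi 0)) :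
    ∫ ξ in Ioi (0:ℝ), u (x + ξ) * u (y + ξ) = (u x * u' y - u y * u' x) / (x - y) := by
  have hxy' : x - y ≠ 0 := sub_ne_zero.mpr hxy
  have hW : ∀ ξ ∈ Ici (0:ℝ), HasDerivAt
      (fun ξ => (u (y + ξ) * u' (x + ξ) - u (x + ξ) * u' (y + ξ)) / (x - y))
      (u (x + ξ) * u (y + ξ)) ξ := fun ξ _ => by
    simpa only [mul_div_cancel_left₀ _ hxy'] using
      (hasDerivAt_airy_shifted_wronskian hu hu' x y ξ).div_const (x - y)
  have hWlim : Tendsto (fun ξ => (u (y + ξ) * u' (x + ξ) - u (x + ξ) * u' (y + ξ)) / (x - y))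
      atTop (𝓝 0) := by
    simpa using (((hlim.comp_const_add y).mul (hlim'.comp_const_add x)).sub
      ((hlim.comp_const_add x).mul (hlim'.comp_const_add y))).div_const (x - y)
  rw [integral_Ioi_of_hasDerivAt_of_tendsto' hW hint hWlim]
  simp only [add_zero]
  ring

theorem integral_Ioi_airy_sq_shift (x : ℝ)
    (hint : IntegrableOn (fun ξ => u (x + ξ) ^ 2) (Ioi 0)) :
    ∫ ξ in Ioi (0:ℝ), u (x + ξ) ^ 2 = u' x ^ 2 - x * u x ^ 2 := by
  set F : ℝ → ℝ := fun ξ => (x + ξ) * u (x + ξ) ^ 2 - u' (x + ξ) ^ 2 with hF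
  have hFderiv : ∀ ξ ∈ Ici (0:ℝ), HasDerivAt F (u (x + ξ) ^ 2) ξ := fun ξ _ =>
    (hasDerivAt_airy_mul_sq_sub_sq hu hu' (x + ξ)).comp_const_add x ξ
  have hFlim : Tendsto F atTop (𝓝 (limUnder atTop F)) :=
    tendsto_limUnder_of_hasDerivAt_of_integrableOn_Ioi
      (fun ξ hξ => hFderiv ξ (Ioi_subset_Ici_self hξ)) hint
  have hFlim_zero : limUnder atTop F = 0 := by
    refine eq_zero_of_tendsto_smul_of_integrableOn_Ioi hint ?_
    have := (hFlim.add ((hlim'.comp_const_add x).pow 2)).sub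
      (((hlim.comp_const_add x).pow 2).const_mul x)
    refine (this.congr fun ξ => ?_).trans ?_
    · simp only [hF, smul_eq_mul]; ring
    · simp
  rw [integral_Ioi_of_hasDerivAt_of_tendsto' hFderiv hint (hFlim_zero ▸ hFlim)]
  simp only [hF, add_zero]
  ring

end AiryEquation

/-- Airy kernel factorization: for any solution Ai of the Airy ODE Ai'' = x·Ai that,
together with its derivative, decays at +∞ (so that the integrals converge),
(Ai(x)Ai'(y) - Ai(y)Ai'(x))/(x-y) = ∫₀^∞ Ai(x+ξ)Ai(y+ξ) dξ, with the continuous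
extension Ai'(x)² - x·Ai(x)² on the diagonal. -/
theorem stmt17 (Ai Ai' : ℝ → ℝ)
    (hderiv : ∀ x, HasDerivAt Ai (Ai' x) x)
    (hderiv' : ∀ x, HasDerivAt Ai' (x * Ai x) x)
    (hlim : Filter.Tendsto Ai Filter.atTop (nhds 0))
    (hlim' : Filter.Tendsto Ai' Filter.atTop (nhds 0))
    (hint : ∀ x y : ℝ,
      MeasureTheory.IntegrableOn (fun ξ => Ai (x + ξ) * Ai (y + ξ)) (Set.Ioi 0)) :
    ∀ x y : ℝ,
      (x ≠ y →
        (Ai x * Ai' y - Ai y * Ai' x) / (x - y)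
          = ∫ ξ in Set.Ioi (0:ℝ), Ai (x + ξ) * Ai (y + ξ)) ∧
      (Ai' x ^ 2 - x * Ai x ^ 2 = ∫ ξ in Set.Ioi (0:ℝ), Ai (x + ξ) ^ 2) := by
  intro x y
  refine ⟨fun hxy => ?_, ?_⟩
  · rw [integral_Ioi_airy_mul_shift hderiv hderiv' hlim hlim' hxy (hint x y)]
  · rw [integral_Ioi_airy_sq_shift hderiv hderiv' hlim hlim' x
      (by simpa only [sq] using hint x x)]
end
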